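/- arXiv:1205.0037 — 3 statements merged into one kernel-verified Lean document; each statement's English description precedes it below -/
import Mathlib

section
/- Let r be a positive integer, 1 ≤ l ≤ r−1, and s_1, ..., s_r positive integers such that the relevant series converge absolutely. Then T_l(s_1, ..., s_r) = ∑_{j=1}^l ∑_{(a_k)_{1≤k≤l, k≠j}, 0 ≤ a_k ≤ s_k − 1} M_j · T_{l−1}(s_1 − a_1, ..., ŝ_j, ..., s_l − a_l, s_j + A_j, s_{l+1}, ..., s_r), where the hat denotes omission of the j-th entry among the first l arguments, A_j := ∑_{1≤k≤l, k≠j} a_k, and M_j := (s_j + A_j − 1)! / ((s_j − 1)! · ∏_{1≤k≤l, k≠j} a_k!). -/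
/-!
For positive reals `x_1, …, x_l` with `X = x_1 + ⋯ + x_l` one has the partial fraction identity
`∏ x_k^{-s_k} = ∑_j ∑_a M_j X^{-(s_j + A_j)} ∏_{k ≠ j} x_k^{-(s_k - a_k)}`.
It follows by induction on `∑ s_k` from `1 = ∑_d x_d / X`, which lowers one exponent and raises
the power of `X`; the coefficients are then collected with Pascal's rule for multinomial
coefficients. Applying the identity to `m_1, …, m_l` in a term of `T_l`, and then reordering
`m_1, …, m_l` so that `m_j` comes last, turns `X` into `n_l` and leaves `n_{l+1}, …, n_r`
unchanged, so the `(j, a)`-summand is a term of `T_{l-1}` at the new arguments. Summing over `m`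
exchanges the finite sums with the (summable) series.
-/

/-- The term of the auxiliary series
`T_l(t_1, …, t_r) = ∑_{m_1, …, m_r ≥ 1} (∏_{k ≤ l} m_k^{-t_k})(∏_{k > l} n_k^{-t_k})`
where `n_k = m_1 + ⋯ + m_k` (here `k : Fin r` is 0-indexed, so the first `l`
coordinates are the `m`-type factors). -/
noncomputable def Tlterm (r l : ℕ) (t : Fin r → ℕ)
    (m : {m : Fin r → ℕ // ∀ j, 0 < m j}) : ℝ :=
  ∏ k : Fin r,
    if (k : ℕ) < l then 1 / ((m.1 k : ℝ) ^ t k)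
    else 1 / (((∑ j ∈ Finset.univ.filter (fun j : Fin r => j ≤ k), m.1 j : ℕ) : ℝ) ^ t k)

/-- The value `T_l(t_1, …, t_r)`. -/
noncomputable def Tl (r l : ℕ) (t : Fin r → ℕ) : ℝ :=
  ∑' m, Tlterm r l t m

/-- The argument list of `T_{l-1}` appearing in the reduction step (8) of the paper,
for `l = e + 1`: the first `l - 1 = e` entries are `s_k - a_k` for `1 ≤ k ≤ l`, `k ≠ j`
(in order, realized via `Fin.succAbove`), the `l`-th entry is `s_j + A_j` where
`A_j = ∑_{k ≠ j} a_k`, and the remaining entries are `s_{l+1}, …, s_r` unchanged. -/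
def newArgs (r e : ℕ) (hle : e + 2 ≤ r) (s' : Fin r → ℕ) (j : Fin (e + 1))
    (a : ∀ i : Fin e, Fin (s' (Fin.castLE (by omega) (j.succAbove i)))) :
    Fin r → ℕ := fun i =>
  if h : (i : ℕ) < e + 1 then
    (Fin.snoc (fun i' : Fin e => s' (Fin.castLE (by omega) (j.succAbove i')) - (a i' : ℕ))
      (s' (Fin.castLE (by omega) j) + ∑ i' : Fin e, (a i' : ℕ)) : Fin (e + 1) → ℕ) ⟨(i : ℕ), h⟩
  else s' i

open Finset Nat

section PartialFractions

variable {ι K : Type*} [DecidableEq ι]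

lemma sub_single_add_single {c : ι → ℕ} {d : ι} (hd : 0 < c d) :
    c - Pi.single d 1 + Pi.single d 1 = c := by
  ext k
  rcases eq_or_ne k d with rfl | h
  · simp; omega
  · simp [h]

variable [Fintype ι]

lemma sum_sub_single_add_one {c : ι → ℕ} {d : ι} (hd : 0 < c d) :
    ∑ k, (c - Pi.single d 1 : ι → ℕ) k + 1 = ∑ k, c k := by
  conv_rhs => rw [← sub_single_add_single hd]
  simp only [Pi.add_apply, sum_add_distrib, sum_pi_single', mem_univ, if_true]

lemma prod_factorial_eq_mul_prod_factorial_sub_single {c : ι → ℕ} {d : ι} (hd : 0 < c d) :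
    ∏ k, (c k)! = c d * ∏ k, ((c - Pi.single d 1 : ι → ℕ) k)! := by
  rw [← mul_prod_erase _ _ (mem_univ d), ← mul_prod_erase _ _ (mem_univ d), ← mul_assoc]
  congr 1
  · simp [Nat.mul_factorial_pred hd.ne']
  · exact prod_congr rfl fun k hk => by simp [ne_of_mem_erase hk]

theorem Nat.multinomial_eq_sum_sub_single (c : ι → ℕ) (hc : c ≠ 0) :
    multinomial univ c = ∑ d with 0 < c d, multinomial univ (c - Pi.single d 1) := by
  obtain ⟨N, hN⟩ : ∃ N, ∑ k, c k = N + 1 := by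
    refine Nat.exists_eq_add_one.mpr (Nat.pos_of_ne_zero fun h => hc ?_)
    ext k; exact (sum_eq_zero_iff.mp h) k (mem_univ k)
  have hpos : 0 < ∏ k, (c k)! := prod_pos fun k _ => factorial_pos _
  refine Nat.eq_of_mul_eq_mul_left hpos ?_
  have hterm : ∀ d ∈ ({d | 0 < c d} : Finset ι),
      (∏ k, (c k)!) * multinomial univ (c - Pi.single d 1) = c d * N ! := by
    intro d hd
    have hd : 0 < c d := (mem_filter.mp hd).2
    rw [prod_factorial_eq_mul_prod_factorial_sub_single hd, mul_assoc, multinomial_spec]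
    congr 2
    have := sum_sub_single_add_one hd
    omega
  rw [multinomial_spec, mul_sum, sum_congr rfl hterm, ← sum_mul,
    sum_filter_of_ne fun d _ h => Nat.pos_of_ne_zero h, hN, factorial_succ]

/-- With `c j = s j - 1` and `c k = a_k` for `k ≠ j`, `Nat.multinomial univ c` is the paper's
coefficient `M_j`. -/
def boxFace (s : ι → ℕ) (j : ι) : Finset (ι → ℕ) :=
  {c ∈ Fintype.piFinset fun k => range (s k) | c j + 1 = s j}

lemma mem_boxFace {s c : ι → ℕ} {j : ι} :
    c ∈ boxFace s j ↔ (∀ k, c k < s k) ∧ c j + 1 = s j := by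
  simp [boxFace]

lemma map_boxFace_sub_single (s : ι → ℕ) (j d : ι) :
    (boxFace (s - Pi.single d 1) j).map (addRightEmbedding (Pi.single d 1)) =
      {c ∈ boxFace s j | 0 < c d} := by
  ext c
  simp only [mem_map, mem_filter, mem_boxFace, addRightEmbedding_apply]
  constructor
  · rintro ⟨c, ⟨hlt, hj⟩, rfl⟩
    refine ⟨⟨fun k => ?_, ?_⟩, by simp⟩
    · have := hlt k
      rcases eq_or_ne k d with rfl | h
      · simp at this ⊢; omega
      · simpa [h] using this
    · rcases eq_or_ne j d with rfl | h
      · simp at hj ⊢; omega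
      · simpa [h] using hj
  · rintro ⟨⟨hlt, hj⟩, hd⟩
    refine ⟨c - Pi.single d 1, ⟨fun k => ?_, ?_⟩, sub_single_add_single hd⟩
    · have := hlt k
      rcases eq_or_ne k d with rfl | h
      · simp; omega
      · simpa [h] using this
    · rcases eq_or_ne j d with rfl | h
      · simp; omega
      · simpa [h] using hj

variable [Field K]

/-- On `boxFace s j` the factor `x j` cancels the `j`-th factor of the product, since
`s j - c j = 1`, leaving `X^{-(s_j + A_j)} ∏_{k ≠ j} x_k^{-(s_k - a_k)}`. -/
def pfTerm (x : ι → K) (s : ι → ℕ) (j : ι) (c : ι → ℕ) : K :=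
  x j / (∑ k, x k) ^ (∑ k, c k + 1) * ∏ k, (x k ^ (s k - c k))⁻¹

lemma pfTerm_add_single (x : ι → K) (s : ι → ℕ) (j d : ι) (c : ι → ℕ) :
    pfTerm x s j (c + Pi.single d 1) = (∑ k, x k)⁻¹ * pfTerm x (s - Pi.single d 1) j c := by
  have hsum := sum_sub_single_add_one (c := c + Pi.single d 1) (d := d) (by simp)
  rw [add_tsub_cancel_right] at hsum
  have hexp : ∀ k, s k - (c + Pi.single d 1 : ι → ℕ) k = (s - Pi.single d 1 : ι → ℕ) k - c k := by
    intro k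
    rcases eq_or_ne k d with rfl | h
    · simp; omega
    · simp [h]
  simp only [pfTerm, ← hsum, hexp, pow_succ]
  ring

lemma sum_boxFace_multinomial_mul {s : ι → ℕ} (hs : ∀ k, 0 < s k) (j : ι) (w : (ι → ℕ) → K) :
    ∑ c ∈ boxFace s j, (multinomial univ c : K) * w c =
      (if s j = 1 then w 0 else 0) + ∑ c ∈ boxFace s j, ∑ d,
        (if 0 < c d then (multinomial univ (c - Pi.single d 1) : K) else 0) * w c := by
  have hmem : 0 ∈ boxFace s j ↔ s j = 1 := by
    simp only [mem_boxFace, Pi.zero_apply, hs, implies_true, true_and, zero_add, eq_comm]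
  simp only [← hmem]
  rw [← sum_ite_eq', ← sum_add_distrib]
  refine sum_congr rfl fun c _ => ?_
  by_cases hc : c = 0
  · simp [hc, multinomial]
  · rw [if_neg hc, zero_add, multinomial_eq_sum_sub_single c hc, cast_sum, sum_filter, sum_mul]

lemma div_sum_mul_prod_inv_pow_of_one_lt (x : ι → K) (hx : ∀ k, x k ≠ 0) {s : ι → ℕ} {d : ι}
    (hd : 1 < s d) (ih : ∏ k, (x k ^ (s - Pi.single d 1 : ι → ℕ) k)⁻¹ =
      ∑ j, ∑ c ∈ boxFace (s - Pi.single d 1) j,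
        (multinomial univ c : K) * pfTerm x (s - Pi.single d 1) j c) :
    x d / (∑ k, x k) * ∏ k, (x k ^ s k)⁻¹ = ∑ j, ∑ c ∈ boxFace s j,
      (if 0 < c d then (multinomial univ (c - Pi.single d 1) : K) else 0) * pfTerm x s j c := by
  have hmul : x d * ∏ k, (x k ^ s k)⁻¹ = ∏ k, (x k ^ (s - Pi.single d 1 : ι → ℕ) k)⁻¹ := by
    rw [← mul_prod_erase _ _ (mem_univ d), ← mul_prod_erase _ _ (mem_univ d), ← mul_assoc]
    congr 1
    · rw [show s d = (s - Pi.single d 1 : ι → ℕ) d + 1 by simp; omega, pow_succ, mul_inv,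
        mul_left_comm, mul_inv_cancel₀ (hx d), mul_one]
    · exact prod_congr rfl fun k hk => by simp [ne_of_mem_erase hk]
  rw [div_mul_eq_mul_div, hmul, div_eq_inv_mul, ih, mul_sum]
  refine sum_congr rfl fun j _ => ?_
  simp_rw [mul_sum, ite_mul, zero_mul]
  rw [← sum_filter, ← map_boxFace_sub_single, sum_map]
  refine sum_congr rfl fun c _ => ?_
  rw [addRightEmbedding_apply, add_tsub_cancel_right, pfTerm_add_single]
  ring

theorem prod_inv_pow_eq_sum_boxFace (x : ι → K) (hx : ∀ k, x k ≠ 0) (hX : ∑ k, x k ≠ 0)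
    (s : ι → ℕ) (hs : ∀ k, 0 < s k) :
    ∏ k, (x k ^ s k)⁻¹ = ∑ j, ∑ c ∈ boxFace s j, (multinomial univ c : K) * pfTerm x s j c := by
  induction hN : ∑ k, s k using Nat.strong_induction_on generalizing s with
  | _ N ih =>
  have hstep : ∀ d, x d / (∑ k, x k) * ∏ k, (x k ^ s k)⁻¹ =
      (if s d = 1 then pfTerm x s d 0 else 0) + ∑ j, ∑ c ∈ boxFace s j,
        (if 0 < c d then (multinomial univ (c - Pi.single d 1) : K) else 0) * pfTerm x s j c := by
    intro d
    rcases (Nat.one_le_iff_ne_zero.mpr (hs d).ne').eq_or_lt with hd | hd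
    · rw [if_pos hd.symm, sum_eq_zero fun j _ => sum_eq_zero fun c hc => ?_, add_zero]
      · simp [pfTerm]
      · have := (mem_boxFace.mp hc).1 d
        rw [if_neg (by omega), zero_mul]
    · have hs' : ∀ k, 0 < (s - Pi.single d 1 : ι → ℕ) k := fun k => by
        rcases eq_or_ne k d with rfl | h
        · simp; omega
        · simp [h, hs]
      have hlt : ∑ k, (s - Pi.single d 1 : ι → ℕ) k < N :=
        hN ▸ lt_of_lt_of_eq (Nat.lt_succ_self _) (sum_sub_single_add_one (hs d))
      rw [if_neg hd.ne', zero_add]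
      exact div_sum_mul_prod_inv_pow_of_one_lt x hx hd (ih _ hlt _ hs' rfl)
  calc ∏ k, (x k ^ s k)⁻¹ = ∑ d, x d / (∑ k, x k) * ∏ k, (x k ^ s k)⁻¹ := by
        rw [← sum_mul, ← sum_div, div_self hX, one_mul]
    _ = _ := by
        simp_rw [hstep, sum_boxFace_multinomial_mul hs, sum_add_distrib]
        congr 1
        rw [sum_comm]
        exact sum_congr rfl fun j _ => sum_comm

lemma multinomial_mul_pfTerm_insertNth [CharZero K] {w : ℕ} (x : Fin (w + 1) → K)
    (s : Fin (w + 1) → ℕ) {j : Fin (w + 1)} (hxj : x j ≠ 0) (hsj : 0 < s j) (a : Fin w → ℕ) :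
    (multinomial univ (Fin.insertNth (α := fun _ => ℕ) j (s j - 1) a) : K) *
        pfTerm x s j (Fin.insertNth (α := fun _ => ℕ) j (s j - 1) a) =
      ((s j + ∑ i, a i - 1)! : K) / (((s j - 1)! * ∏ i, (a i)! : ℕ) : K) *
        (((∑ k, x k) ^ (s j + ∑ i, a i))⁻¹ *
          ∏ i, (x (j.succAbove i) ^ (s (j.succAbove i) - a i))⁻¹) := by
  set c := Fin.insertNth (α := fun _ => ℕ) j (s j - 1) a
  have hsum : ∑ k, c k = s j + ∑ i, a i - 1 := by
    simp only [c, Fin.sum_univ_succAbove _ j, Fin.insertNth_apply_same,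
      Fin.insertNth_apply_succAbove]
    omega
  have hprod : ∏ k, (c k)! = (s j - 1)! * ∏ i, (a i)! := by
    simp [c, Fin.prod_univ_succAbove _ j]
  have hcoef : (multinomial univ c : K) = ((∑ k, c k)! : K) / ((∏ k, (c k)! : ℕ) : K) := by
    rw [eq_div_iff (cast_ne_zero.mpr (prod_ne_zero_iff.mpr fun k _ => factorial_ne_zero _)),
      ← cast_mul, mul_comm, multinomial_spec]
  rw [hcoef, pfTerm, hsum, hprod, show s j + ∑ i, a i - 1 + 1 = s j + ∑ i, a i by omega,
    Fin.prod_univ_succAbove _ j]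
  simp only [c, Fin.insertNth_apply_same, Fin.insertNth_apply_succAbove,
    show s j - (s j - 1) = 1 by omega, pow_one]
  field_simp

theorem prod_inv_pow_eq_sum_succAbove [CharZero K] {w : ℕ} (x : Fin (w + 1) → K)
    (hx : ∀ k, x k ≠ 0) (hX : ∑ k, x k ≠ 0) (s : Fin (w + 1) → ℕ) (hs : ∀ k, 0 < s k) :
    ∏ k, (x k ^ s k)⁻¹ = ∑ j, ∑ a : (∀ i : Fin w, Fin (s (j.succAbove i))),
      ((s j + ∑ i, (a i : ℕ) - 1)! : K) / (((s j - 1)! * ∏ i, (a i : ℕ)! : ℕ) : K) *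
        (((∑ k, x k) ^ (s j + ∑ i, (a i : ℕ)))⁻¹ *
          ∏ i, (x (j.succAbove i) ^ (s (j.succAbove i) - a i))⁻¹) := by
  rw [prod_inv_pow_eq_sum_boxFace x hx hX s hs]
  refine sum_congr rfl fun j _ => Eq.symm ?_
  refine sum_bij (fun a _ => Fin.insertNth j (s j - 1) fun i => (a i : ℕ))
    (fun a _ => ?_) (fun a _ b _ h => ?_) (fun c hc => ?_)
    fun a _ => (multinomial_mul_pfTerm_insertNth x s (hx j) (hs j) _).symm
  · rw [mem_boxFace, Fin.forall_iff_succAbove j]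
    have := hs j
    simp only [Fin.insertNth_apply_same, Fin.insertNth_apply_succAbove, Fin.is_lt, implies_true,
      and_true]
    omega
  · funext i
    exact Fin.ext (by simpa using congrFun h (j.succAbove i))
  · obtain ⟨hlt, hj⟩ := mem_boxFace.mp hc
    refine ⟨fun i => ⟨c (j.succAbove i), hlt _⟩, mem_univ _, ?_⟩
    change Fin.insertNth (α := fun _ => ℕ) j (s j - 1) (Fin.removeNth j c) = c
    rw [Fin.insertNth_removeNth, Function.update_eq_self_iff]
    omega

end PartialFractions

@[to_additive]
lemma Fin.prod_eq_prod_castLE {M : Type*} [CommMonoid M] {l r : ℕ} (h : l ≤ r) (f : Fin r → M)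
    {s : Finset (Fin r)} (hs : ∀ k, k ∈ s ↔ (k : ℕ) < l) :
    ∏ k ∈ s, f k = ∏ k : Fin l, f (Fin.castLE h k) := by
  rw [prod_subtype s hs, ← (Fin.castLEquiv h).prod_comp]
  rfl

def partialSum {r : ℕ} (m : Fin r → ℕ) (k : Fin r) : ℕ :=
  ∑ j ∈ univ.filter (fun j => j ≤ k), m j

lemma partialSum_comp_perm {r l : ℕ} (π : Equiv.Perm (Fin r))
    (hπ : ∀ k : Fin r, l ≤ (k : ℕ) → π k = k) (m : Fin r → ℕ) {k : Fin r}
    (hk : l ≤ (k : ℕ) + 1) : partialSum (m ∘ π) k = partialSum m k := by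
  refine sum_equiv π (fun i => ?_) fun _ _ => rfl
  simp only [mem_filter, mem_univ, true_and, Fin.le_def]
  by_cases hi : l ≤ (i : ℕ)
  · rw [hπ i hi]
  · have : (π i : ℕ) < l := by
      by_contra h
      exact hi (π.injective (hπ (π i) (not_lt.mp h)) ▸ not_lt.mp h)
    omega

lemma Tlterm_eq_mul {r l : ℕ} (h : l ≤ r) (t : Fin r → ℕ) (m : {m : Fin r → ℕ // ∀ j, 0 < m j}) :
    Tlterm r l t m = (∏ k : Fin l, ((m.1 (Fin.castLE h k) : ℝ) ^ t (Fin.castLE h k))⁻¹) *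
      ∏ k ∈ univ.filter (fun k : Fin r => l ≤ (k : ℕ)), ((partialSum m.1 k : ℝ) ^ t k)⁻¹ := by
  rw [Tlterm, prod_ite, Fin.prod_eq_prod_castLE h _ (by simp)]
  simp only [one_div, not_lt]
  rfl

def moveLastTo {e : ℕ} (j : Fin (e + 1)) : Equiv.Perm (Fin (e + 1)) :=
  (finSuccEquiv' (Fin.last e)).trans (finSuccEquiv' j).symm

lemma moveLastTo_castSucc {e : ℕ} (j : Fin (e + 1)) (i : Fin e) :
    moveLastTo j (Fin.castSucc i) = j.succAbove i := by
  rw [moveLastTo, Equiv.trans_apply, ← Fin.succAbove_last, finSuccEquiv'_succAbove,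
    finSuccEquiv'_symm_some]

def compPerm {α : Type*} (π : Equiv.Perm α) :
    {m : α → ℕ // ∀ k, 0 < m k} ≃ {m : α → ℕ // ∀ k, 0 < m k} where
  toFun m := ⟨m.1 ∘ π, fun k => m.2 (π k)⟩
  invFun m := ⟨m.1 ∘ π.symm, fun k => m.2 (π.symm k)⟩
  left_inv m := by ext; simp
  right_inv m := by ext; simp

section newArgs

variable {r e : ℕ} (hle : e + 2 ≤ r) (s : Fin r → ℕ) (j : Fin (e + 1))
  (a : ∀ i : Fin e, Fin (s (Fin.castLE (by omega) (j.succAbove i))))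

lemma newArgs_castLE (i : Fin e) :
    newArgs r e hle s j a (Fin.castLE (by omega) i) =
      s (Fin.castLE (by omega) (j.succAbove i)) - a i := by
  rw [newArgs, dif_pos (by simp)]
  exact Fin.snoc_castSucc (α := fun _ => ℕ) ..

lemma newArgs_of_val_eq {k : Fin r} (hk : (k : ℕ) = e) :
    newArgs r e hle s j a k = s (Fin.castLE (by omega) j) + ∑ i, (a i : ℕ) := by
  rw [newArgs, dif_pos (by omega)]
  rw [show (⟨k, by omega⟩ : Fin (e + 1)) = Fin.last e from Fin.ext hk]
  exact Fin.snoc_last (α := fun _ => ℕ) ..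

lemma newArgs_of_le_val {k : Fin r} (hk : e + 1 ≤ (k : ℕ)) : newArgs r e hle s j a k = s k := by
  rw [newArgs, dif_neg (by omega)]

end newArgs

def headPerm {r e : ℕ} (h : e + 1 ≤ r) (j : Fin (e + 1)) : Equiv.Perm (Fin r) :=
  (moveLastTo j).extendDomain (Fin.castLEquiv h)

lemma headPerm_castLE {r e : ℕ} (h : e + 1 ≤ r) (j k : Fin (e + 1)) :
    headPerm h j (Fin.castLE h k) = Fin.castLE h (moveLastTo j k) :=
  Equiv.Perm.extendDomain_apply_image _ _ k

lemma headPerm_of_le_val {r e : ℕ} (h : e + 1 ≤ r) (j : Fin (e + 1)) {k : Fin r}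
    (hk : e + 1 ≤ (k : ℕ)) : headPerm h j k = k :=
  Equiv.Perm.extendDomain_apply_not_subtype _ _ (by simpa using hk)

lemma partialSum_eq_sum_castLE {r e : ℕ} (h : e + 1 ≤ r) (m : Fin r → ℕ) :
    partialSum m ⟨e, h⟩ = ∑ k : Fin (e + 1), m (Fin.castLE h k) :=
  Fin.sum_eq_sum_castLE h m fun k => by simp [Fin.le_def]

lemma Tlterm_newArgs_compPerm {r e : ℕ} (hle : e + 2 ≤ r) (s : Fin r → ℕ) (j : Fin (e + 1))
    (a : ∀ i : Fin e, Fin (s (Fin.castLE (by omega) (j.succAbove i))))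
    (m : {m : Fin r → ℕ // ∀ j, 0 < m j}) :
    Tlterm r e (newArgs r e hle s j a) (compPerm (headPerm (by omega) j) m) =
      (((∑ k : Fin (e + 1), (m.1 (Fin.castLE (by omega) k) : ℝ)) ^
          (s (Fin.castLE (by omega) j) + ∑ i, (a i : ℕ)))⁻¹ *
        ∏ i, ((m.1 (Fin.castLE (by omega) (j.succAbove i)) : ℝ) ^
          (s (Fin.castLE (by omega) (j.succAbove i)) - a i))⁻¹) *
      ∏ k ∈ univ.filter (fun k : Fin r => e + 1 ≤ (k : ℕ)), ((partialSum m.1 k : ℝ) ^ s k)⁻¹ := by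
  have he : e < r := by omega
  set π := headPerm (by omega : e + 1 ≤ r) j
  have hlow : ∀ i : Fin e, (compPerm π m).1 (Fin.castLE he.le i) =
      m.1 (Fin.castLE (by omega) (j.succAbove i)) := fun i => by
    change m.1 (π (Fin.castLE (by omega) (Fin.castSucc i))) = _
    rw [headPerm_castLE, moveLastTo_castSucc]
  have hsplit : univ.filter (fun k : Fin r => e ≤ (k : ℕ)) =
      insert ⟨e, he⟩ (univ.filter fun k : Fin r => e + 1 ≤ (k : ℕ)) := by
    ext k; simp [Fin.ext_iff]; omega
  have hpartial : ∀ k : Fin r, e ≤ (k : ℕ) → partialSum (compPerm π m).1 k = partialSum m.1 k :=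
    fun k hk => partialSum_comp_perm π (fun k hk => headPerm_of_le_val _ j hk) m.1 (by omega)
  have htail : ∏ k ∈ univ.filter (fun k : Fin r => e + 1 ≤ (k : ℕ)),
      ((partialSum (compPerm π m).1 k : ℝ) ^ newArgs r e hle s j a k)⁻¹ =
        ∏ k ∈ univ.filter (fun k : Fin r => e + 1 ≤ (k : ℕ)), ((partialSum m.1 k : ℝ) ^ s k)⁻¹ :=
    prod_congr rfl fun k hk => by
      have hk : e + 1 ≤ (k : ℕ) := (mem_filter.mp hk).2
      rw [hpartial k (by omega), newArgs_of_le_val hle s j a hk]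
  rw [Tlterm_eq_mul he.le, hsplit, prod_insert (by simp), htail, hpartial _ le_rfl,
    partialSum_eq_sum_castLE, newArgs_of_val_eq hle s j a rfl]
  simp only [hlow, newArgs_castLE, cast_sum]
  ring

lemma Tlterm_succ_eq_sum {r e : ℕ} (hle : e + 2 ≤ r) (s : Fin r → ℕ) (hs : ∀ k, 0 < s k)
    (m : {m : Fin r → ℕ // ∀ j, 0 < m j}) :
    Tlterm r (e + 1) s m =
      ∑ j : Fin (e + 1), ∑ a : (∀ i : Fin e, Fin (s (Fin.castLE (by omega) (j.succAbove i)))),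
        ((s (Fin.castLE (by omega) j) + ∑ i, (a i : ℕ) - 1)! : ℝ) /
          (((s (Fin.castLE (by omega) j) - 1)! * ∏ i, (a i : ℕ)! : ℕ) : ℝ) *
        Tlterm r e (newArgs r e hle s j a) (compPerm (headPerm (by omega) j) m) := by
  have hm : ∀ k : Fin (e + 1), (0 : ℝ) < m.1 (Fin.castLE (by omega) k) :=
    fun k => by exact_mod_cast m.2 _
  rw [Tlterm_eq_mul (by omega), prod_inv_pow_eq_sum_succAbove _ (fun k => (hm k).ne')
    (sum_pos (fun k _ => hm k) univ_nonempty).ne' _ fun k => hs _, sum_mul]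
  simp_rw [Tlterm_newArgs_compPerm, sum_mul, mul_assoc]

/-- **Step (8): reduction of `T_l` to `T_{l-1}`.**
For `1 ≤ l ≤ r - 1` (here `l = e + 1`, so `e + 2 ≤ r`) and positive integers
`s_1, …, s_r` such that all the relevant series converge absolutely,
`T_l(s_1, …, s_r) = ∑_{j=1}^{l} ∑_{(a_k)_{k≤l, k≠j}, 0 ≤ a_k ≤ s_k - 1}
   M_j · T_{l-1}(…, s_k - a_k, …, s_j + A_j, s_{l+1}, …, s_r)`,
where `A_j = ∑_{k≤l, k≠j} a_k` and
`M_j = (s_j + A_j - 1)!/((s_j - 1)! ∏_{k≤l, k≠j} a_k!)`. -/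
theorem tl_reduction (r e : ℕ) (hle : e + 2 ≤ r) (s' : Fin r → ℕ)
    (hs' : ∀ j, 0 < s' j)
    (hT' : ∀ (j : Fin (e + 1))
      (a : ∀ i : Fin e, Fin (s' (Fin.castLE (by omega) (j.succAbove i)))),
      Summable (Tlterm r e (newArgs r e hle s' j a))) :
    Tl r (e + 1) s' =
      ∑ j : Fin (e + 1),
        ∑ a : (∀ i : Fin e, Fin (s' (Fin.castLE (by omega) (j.succAbove i)))),
          ((Nat.factorial (s' (Fin.castLE (by omega) j) +
              (∑ i : Fin e, (a i : ℕ)) - 1) : ℝ) /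
            ((Nat.factorial (s' (Fin.castLE (by omega) j) - 1) *
              ∏ i : Fin e, Nat.factorial (a i) : ℕ) : ℝ)) *
          Tl r e (newArgs r e hle s' j a) := by
  have hsummable : ∀ j a, Summable fun m =>
      Tlterm r e (newArgs r e hle s' j a) (compPerm (headPerm (by omega) j) m) :=
    fun j a => ((compPerm (headPerm _ j)).summable_iff (f := Tlterm r e _)).mpr (hT' j a)
  unfold Tl
  rw [tsum_congr (Tlterm_succ_eq_sum hle s' hs'),
    Summable.tsum_finsetSum fun j _ => summable_sum fun a _ => (hsummable j a).mul_left _]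
  refine sum_congr rfl fun j _ => ?_
  rw [Summable.tsum_finsetSum fun a _ => (hsummable j a).mul_left _]
  refine sum_congr rfl fun a _ => ?_
  rw [tsum_mul_left, (compPerm _).tsum_eq (Tlterm r e (newArgs r e hle s' j a))]
end

section
/- For integers s ≥ 2 and t ≥ 2, Euler's decomposition holds: ζ(s)·ζ(t) = ∑_{a=0}^{s−1} C(a + t − 1, t − 1) ζ(t + a, s − a) + ∑_{a=0}^{t−1} C(a + s − 1, s − 1) ζ(s + a, t − a), where C(n, k) denotes the binomial coefficient. -/
/-!
With `z = x + y`, the relation `z / (x^s y^t) = 1 / (x^(s-1) y^t) + 1 / (x^s y^(t-1))` expresses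
`1 / (x^s y^t)` through lattice paths that decrease one exponent at a time, each step costing a
factor `1/z`, until one exponent vanishes. A path stopping at `1 / x^(s-a)` has length `t + a`,
and there are `C(a+t-1, t-1)` of them; this is the partial fraction decomposition of
`1 / (x^s y^t)`. Taking `x = m`, `y = n` and summing over all `m, n ≥ 1`, the substitution
`(n₁, n₂) = (m + n, m)` turns each family of terms into a double zeta value. All terms are
nonnegative, so the sums may be interchanged freely.
-/

/-- The Riemann zeta value `ζ(s) = ∑_{n=1}^∞ n^{-s}` for a natural number exponent. -/
noncomputable def zetaVal (s : ℕ) : ℝ :=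
  ∑' n : ℕ, 1 / ((n : ℝ) + 1) ^ s

/-- The double zeta value `ζ(u, v) = ∑_{n₁ > n₂ > 0} n₁^{-u} n₂^{-v}`. -/
noncomputable def zeta2 (u v : ℕ) : ℝ :=
  ∑' p : {p : ℕ × ℕ // 0 < p.2 ∧ p.2 < p.1}, 1 / ((p.1.1 : ℝ) ^ u * (p.1.2 : ℝ) ^ v)

open Finset

section PartialFractions

variable {K : Type*} [Field K]

/-- `t.multichoose a = C(a+t-1, a)` agrees with `C(a+t-1, t-1)` for `t ≥ 1`; unlike the latter,
it makes the Pascal recurrence `partialFractionSum_succ_succ` hold down to `t = 0`. -/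
def partialFractionSum (x z : K) (s t : ℕ) : K :=
  ∑ a ∈ range s, (t.multichoose a : K) / (x ^ (s - a) * z ^ (t + a))

@[simp]
lemma partialFractionSum_zero_left (x z : K) (t : ℕ) : partialFractionSum x z 0 t = 0 := by
  simp [partialFractionSum]

lemma partialFractionSum_succ_zero (x z : K) (s : ℕ) :
    partialFractionSum x z (s + 1) 0 = 1 / x ^ (s + 1) := by
  simp [partialFractionSum, sum_range_succ']

lemma partialFractionSum_succ_succ (x z : K) (s t : ℕ) :
    partialFractionSum x z (s + 1) (t + 1) =
      (partialFractionSum x z s (t + 1) + partialFractionSum x z (s + 1) t) / z := by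
  simp only [partialFractionSum, sum_range_succ' _ s, add_div, sum_div]
  rw [← add_assoc, ← sum_add_distrib]
  congr 1
  · refine sum_congr rfl fun a _ => ?_
    rw [Nat.multichoose_succ_succ, Nat.cast_add, add_div, Nat.add_sub_add_right]
    ring
  · simp only [Nat.multichoose_zero_right]
    ring

lemma one_div_pow_mul_pow_succ_succ {x y z : K} (hx : x ≠ 0) (hy : y ≠ 0) (hz : z ≠ 0)
    (hxyz : x + y = z) (s t : ℕ) :
    1 / (x ^ (s + 1) * y ^ (t + 1)) =
      (1 / (x ^ s * y ^ (t + 1)) + 1 / (x ^ (s + 1) * y ^ t)) / z := by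
  subst hxyz
  field_simp
  ring

theorem one_div_pow_mul_pow_eq_partialFractionSum {x y z : K} (hx : x ≠ 0) (hy : y ≠ 0)
    (hz : z ≠ 0) (hxyz : x + y = z) :
    ∀ s t : ℕ, s + t ≠ 0 →
      1 / (x ^ s * y ^ t) = partialFractionSum x z s t + partialFractionSum y z t s
  | 0, 0, h => absurd rfl h
  | 0, t + 1, _ => by simp [partialFractionSum_succ_zero]
  | s + 1, 0, _ => by simp [partialFractionSum_succ_zero]
  | s + 1, t + 1, _ => by
    rw [one_div_pow_mul_pow_succ_succ hx hy hz hxyz,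
      one_div_pow_mul_pow_eq_partialFractionSum hx hy hz hxyz s (t + 1) (by omega),
      one_div_pow_mul_pow_eq_partialFractionSum hx hy hz hxyz (s + 1) t (by omega),
      partialFractionSum_succ_succ, partialFractionSum_succ_succ]
    ring

end PartialFractions

lemma partialFractionSum_nonneg {x z : ℝ} (hx : 0 ≤ x) (hz : 0 ≤ z) (s t : ℕ) :
    0 ≤ partialFractionSum x z s t :=
  sum_nonneg fun _ _ => by positivity

lemma Nat.multichoose_eq_choose_pred {n : ℕ} (hn : n ≠ 0) (k : ℕ) :
    n.multichoose k = (k + n - 1).choose (n - 1) := by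
  rw [Nat.multichoose_eq, add_comm n k]
  exact Nat.choose_symm_of_eq_add (by omega)

lemma tsum_finsetSum_of_nonneg {ι β : Type*} {S : Finset ι} {f : ι → β → ℝ}
    (hf : ∀ i ∈ S, ∀ b, 0 ≤ f i b) (h : Summable fun b => ∑ i ∈ S, f i b) :
    ∑' b, ∑ i ∈ S, f i b = ∑ i ∈ S, ∑' b, f i b :=
  Summable.tsum_finsetSum fun i hi =>
    h.of_nonneg_of_le (hf i hi) fun b => single_le_sum (fun j hj => hf j hj b) hi

lemma summable_one_div_succ_pow {s : ℕ} (hs : 2 ≤ s) :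
    Summable fun n : ℕ => 1 / ((n : ℝ) + 1) ^ s := by
  simpa using (summable_nat_add_iff 1).mpr (Real.summable_one_div_nat_pow.mpr hs)

lemma zetaVal_mul_zetaVal {s t : ℕ} (hs : 2 ≤ s) (ht : 2 ≤ t) :
    zetaVal s * zetaVal t = ∑' p : ℕ × ℕ, 1 / (((p.1 : ℝ) + 1) ^ s * ((p.2 : ℝ) + 1) ^ t) := by
  rw [zetaVal, zetaVal, tsum_mul_tsum_of_summable_norm (summable_one_div_succ_pow hs).norm
    (summable_one_div_succ_pow ht).norm]
  simp only [one_div_mul_one_div]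

def doubleZetaIndexEquiv : ℕ × ℕ ≃ {p : ℕ × ℕ // 0 < p.2 ∧ p.2 < p.1} where
  toFun q := ⟨(q.1 + q.2 + 2, q.1 + 1), by omega⟩
  invFun p := (p.1.2 - 1, p.1.1 - p.1.2 - 1)
  left_inv q := by ext <;> simp only <;> omega
  right_inv p := by ext <;> simp only <;> omega

lemma zeta2_eq_tsum_prod (u v : ℕ) :
    zeta2 u v = ∑' p : ℕ × ℕ, 1 / (((p.1 : ℝ) + p.2 + 2) ^ u * ((p.1 : ℝ) + 1) ^ v) := by
  rw [zeta2, ← doubleZetaIndexEquiv.tsum_eq]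
  simp [doubleZetaIndexEquiv, add_assoc]

lemma tsum_partialFractionSum (s t : ℕ)
    (h : Summable fun p : ℕ × ℕ => partialFractionSum ((p.1 : ℝ) + 1) (p.1 + p.2 + 2) s t) :
    ∑' p : ℕ × ℕ, partialFractionSum ((p.1 : ℝ) + 1) (p.1 + p.2 + 2) s t =
      ∑ a ∈ range s, (t.multichoose a : ℝ) * zeta2 (t + a) (s - a) := by
  unfold partialFractionSum at h ⊢
  rw [tsum_finsetSum_of_nonneg (fun _ _ _ => by positivity) h]
  refine sum_congr rfl fun a _ => ?_
  rw [zeta2_eq_tsum_prod, ← tsum_mul_left]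
  refine tsum_congr fun p => ?_
  ring

/-- **Euler's decomposition.** For integers `s, t ≥ 2`,
`ζ(s)ζ(t) = ∑_{a=0}^{s-1} C(a+t-1, t-1) ζ(t+a, s-a)
          + ∑_{a=0}^{t-1} C(a+s-1, s-1) ζ(s+a, t-a)`. -/
theorem euler_decomposition (s t : ℕ) (hs : 2 ≤ s) (ht : 2 ≤ t) :
    zetaVal s * zetaVal t =
      (∑ a ∈ Finset.range s,
        (Nat.choose (a + t - 1) (t - 1) : ℝ) * zeta2 (t + a) (s - a)) +
      ∑ a ∈ Finset.range t,
        (Nat.choose (a + s - 1) (s - 1) : ℝ) * zeta2 (s + a) (t - a) := by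
  set F : ℕ → ℕ → ℕ × ℕ → ℝ := fun s t p =>
    partialFractionSum ((p.1 : ℝ) + 1) (p.1 + p.2 + 2) s t
  have hdecomp (p : ℕ × ℕ) :
      1 / (((p.1 : ℝ) + 1) ^ s * ((p.2 : ℝ) + 1) ^ t) = F s t p + F t s p.swap := by
    simp only [F, Prod.fst_swap, Prod.snd_swap, add_comm (p.2 : ℝ) p.1]
    exact one_div_pow_mul_pow_eq_partialFractionSum (by positivity) (by positivity)
      (by positivity) (by ring) s t (by omega)
  have hnonneg (s t : ℕ) (p : ℕ × ℕ) : 0 ≤ F s t p :=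
    partialFractionSum_nonneg (by positivity) (by positivity) s t
  have hsum : Summable fun p => F s t p + F t s p.swap := by
    simpa only [hdecomp, one_div_mul_one_div] using summable_mul_of_summable_norm
      (summable_one_div_succ_pow hs).norm (summable_one_div_succ_pow ht).norm
  have hF : Summable (F s t) :=
    hsum.of_nonneg_of_le (hnonneg s t) fun p => le_add_of_nonneg_right (hnonneg t s _)
  have hF' : Summable (F t s) := Summable.prod_symm <|
    hsum.of_nonneg_of_le (fun p => hnonneg t s _) fun p => le_add_of_nonneg_left (hnonneg s t _)
  have hswap : ∑' p : ℕ × ℕ, F t s p.swap = ∑' p, F t s p := (Equiv.prodComm ℕ ℕ).tsum_eq _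
  rw [zetaVal_mul_zetaVal hs ht, tsum_congr hdecomp, hF.tsum_add hF'.prod_symm, hswap,
    tsum_partialFractionSum s t hF, tsum_partialFractionSum t s hF']
  simp only [Nat.multichoose_eq_choose_pred (by omega : t ≠ 0),
    Nat.multichoose_eq_choose_pred (by omega : s ≠ 0)]
end

section
/- For any positive integer r, T(1, 1, ..., 1; 1) = r! · ζ(r + 1), where there are r ones among the first arguments of T and ζ denotes the Riemann zeta function. Equivalently, ∑_{m_1, ..., m_r ≥ 1} 1/(m_1 m_2 ⋯ m_r (m_1 + ⋯ + m_r)) = r! ∑_{n=1}^∞ n^{-(r+1)}. -/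
/-- The term of the Mordell–Tornheim series `T(s_1, …, s_r; s)` with positive integer
arguments, indexed by tuples of positive integers `m_1, …, m_r`. -/
noncomputable def MTterm (r : ℕ) (s' : Fin r → ℕ) (s : ℕ)
    (m : {m : Fin r → ℕ // ∀ j, 0 < m j}) : ℝ :=
  1 / ((∏ j, (m.1 j : ℝ) ^ s' j) * ((∑ j, m.1 j : ℕ) : ℝ) ^ s)

/-- The Mordell–Tornheim zeta value `T(s_1, …, s_r; s)`. -/
noncomputable def MT (r : ℕ) (s' : Fin r → ℕ) (s : ℕ) : ℝ :=
  ∑' m, MTterm r s' s m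

/-!
Write `1 / (m₁ ⋯ m_r S) = ∫₀¹ x ^ (S - 1) / (m₁ ⋯ m_r) dx` with `S = m₁ + ⋯ + m_r`.
Summing under the integral, the sum over `m` factorises and the Mercator series
`∑ₘ xᵐ / m = -log (1 - x)` gives `T(1, …, 1; 1) = ∫₀¹ (-log (1 - x)) ^ r / x dx`.
The substitution `x = 1 - e⁻ᵗ` turns this into
`∫₀^∞ tʳ e⁻ᵗ / (1 - e⁻ᵗ) dt = ∑ₖ ∫₀^∞ tʳ e^(-(k+1)t) dt = r! ∑ₖ (k + 1) ^ (-(r+1))`.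
All sums and integrals are taken in `ℝ≥0∞`, where every interchange is free.
-/

open MeasureTheory Set
open scoped ENNReal

theorem ENNReal.tsum_pi_prod {r : ℕ} {β : Fin r → Type*} (f : ∀ j, β j → ℝ≥0∞) :
    ∑' n : (∀ j, β j), ∏ j, f j (n j) = ∏ j, ∑' b, f j b := by
  induction r with
  | zero => simp
  | succ r ih =>
    rw [← (Fin.consEquiv β).tsum_eq, ENNReal.tsum_prod', Fin.prod_univ_succ,
      ← ENNReal.tsum_mul_right]
    refine tsum_congr fun b => ?_
    simp only [Fin.consEquiv_apply, Fin.prod_univ_succ, Fin.cons_zero, Fin.cons_succ,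
      ENNReal.tsum_mul_left, ih fun j => f j.succ]

def posTupleEquiv (ι : Type*) : (ι → ℕ) ≃ {m : ι → ℕ // ∀ j, 0 < m j} where
  toFun n := ⟨fun j => n j + 1, fun j => Nat.succ_pos _⟩
  invFun m j := m.1 j - 1
  left_inv n := by simp
  right_inv m := by ext j; exact Nat.sub_add_cancel (m.2 j)

theorem tsum_eq_toReal_tsum_ofReal {α : Type*} {f : α → ℝ} (hf : ∀ a, 0 ≤ f a) :
    ∑' a, f a = (∑' a, ENNReal.ofReal (f a)).toReal := by
  rw [ENNReal.tsum_toReal_eq fun _ => ENNReal.ofReal_ne_top]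
  exact tsum_congr fun a => (ENNReal.toReal_ofReal (hf a)).symm

theorem lintegral_Ioo_zero_one_pow (k : ℕ) :
    ∫⁻ x in Ioo (0 : ℝ) 1, ENNReal.ofReal (x ^ k) = ENNReal.ofReal (1 / (k + 1)) := by
  rw [← ofReal_integral_eq_lintegral_ofReal
    ((continuous_pow k).integrableOn_Icc.mono_set Ioo_subset_Icc_self)
    ((ae_restrict_mem measurableSet_Ioo).mono fun x hx => pow_nonneg hx.1.le k),
    ← integral_Ioc_eq_integral_Ioo, ← intervalIntegral.integral_of_le zero_le_one, integral_pow]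
  simp

theorem lintegral_Ioi_pow_mul_exp_neg_mul (r : ℕ) {b : ℝ} (hb : 0 < b) :
    ∫⁻ t in Ioi (0 : ℝ), ENNReal.ofReal (t ^ r * Real.exp (-b * t))
      = ENNReal.ofReal (r.factorial / b ^ (r + 1)) := by
  have h := Real.integral_rpow_mul_exp_neg_mul_Ioi (a := r + 1) (by positivity) hb
  simp only [add_sub_cancel_right, Real.rpow_natCast, ← neg_mul] at h
  have hint : IntegrableOn (fun t : ℝ => t ^ r * Real.exp (-b * t)) (Ioi 0) := by
    simpa [Real.rpow_natCast] using integrableOn_rpow_mul_exp_neg_mul_rpow (s := r) (p := 1)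
      (by linarith [r.cast_nonneg (α := ℝ)]) one_pos hb
  rw [← ofReal_integral_eq_lintegral_ofReal hint
    ((ae_restrict_mem measurableSet_Ioi).mono fun t (ht : 0 < t) => by positivity), h,
    Real.Gamma_nat_eq_factorial, ← Nat.cast_add_one, Real.rpow_natCast, div_pow, one_pow,
    one_div_mul_eq_div]

theorem image_one_sub_exp_neg_Ioi : (fun t => 1 - Real.exp (-t)) '' Ioi 0 = Ioo 0 1 := by
  ext x
  constructor
  · rintro ⟨t, ht, rfl⟩
    exact ⟨sub_pos.2 (Real.exp_lt_one_iff.2 (neg_lt_zero.2 ht)),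
      sub_lt_self 1 (Real.exp_pos _)⟩
  · rintro ⟨hx₀, hx₁⟩
    refine ⟨-Real.log (1 - x), neg_pos.2 (Real.log_neg (by linarith) (by linarith)), ?_⟩
    simp [Real.exp_log (sub_pos.2 hx₁)]

theorem lintegral_Ioo_zero_one_eq_lintegral_Ioi_exp_neg (g : ℝ → ℝ≥0∞) :
    ∫⁻ x in Ioo (0 : ℝ) 1, g x
      = ∫⁻ t in Ioi 0, ENNReal.ofReal (Real.exp (-t)) * g (1 - Real.exp (-t)) := by
  rw [← image_one_sub_exp_neg_Ioi]
  refine lintegral_image_eq_lintegral_deriv_mul_of_monotoneOn measurableSet_Ioi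
    (fun t _ => ?_) (fun a _ b _ hab => ?_) g
  · simpa using
      (((Real.hasDerivAt_exp (-t)).comp t (hasDerivAt_neg t)).const_sub 1).hasDerivWithinAt
  · exact sub_le_sub_left (Real.exp_le_exp.2 (neg_le_neg hab)) 1

theorem tsum_ofReal_pow_succ_div {x : ℝ} (hx₀ : 0 ≤ x) (hx₁ : x < 1) :
    ∑' k : ℕ, ENNReal.ofReal (x ^ (k + 1) / (k + 1)) = ENNReal.ofReal (-Real.log (1 - x)) := by
  have h := Real.hasSum_pow_div_log_of_abs_lt_one (abs_lt.2 ⟨by linarith, hx₁⟩)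
  rw [← ENNReal.ofReal_tsum_of_nonneg (fun k => by positivity) h.summable, h.tsum_eq]

theorem tsum_ofReal_exp_neg_succ_mul {t : ℝ} (ht : 0 < t) :
    ∑' k : ℕ, ENNReal.ofReal (Real.exp (-(k + 1) * t))
      = ENNReal.ofReal (Real.exp (-t) / (1 - Real.exp (-t))) := by
  have hq : Real.exp (-t) < 1 := Real.exp_lt_one_iff.2 (neg_lt_zero.2 ht)
  have hterm (k : ℕ) : Real.exp (-t) * Real.exp (-t) ^ k = Real.exp (-(k + 1) * t) := by
    rw [← pow_succ', ← Real.exp_nat_mul]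
    push_cast
    ring_nf
  have h := (hasSum_geometric_of_lt_one (Real.exp_pos (-t)).le hq).mul_left (Real.exp (-t))
  simp only [hterm, ← div_eq_mul_inv] at h
  rw [← ENNReal.ofReal_tsum_of_nonneg (fun k => by positivity) h.summable, h.tsum_eq]

theorem ofReal_one_div_prod_mul_sum_eq_lintegral {ι : Type*} [Fintype ι] [Nonempty ι]
    (m : ι → ℕ) (hm : ∀ j, 0 < m j) :
    ENNReal.ofReal (1 / ((∏ j, (m j : ℝ)) * ((∑ j, m j : ℕ) : ℝ)))
      = ∫⁻ x in Ioo (0 : ℝ) 1, ENNReal.ofReal x⁻¹ * ∏ j, ENNReal.ofReal (x ^ m j / m j) := by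
  obtain ⟨s, hs⟩ : ∃ s, ∑ j, m j = s + 1 :=
    Nat.exists_eq_add_one.2 (Finset.sum_pos (fun j _ => hm j) Finset.univ_nonempty)
  have hprod : (0 : ℝ) < ∏ j, (m j : ℝ) := Finset.prod_pos fun j _ => Nat.cast_pos.2 (hm j)
  have hintegrand : ∀ x ∈ Ioo (0 : ℝ) 1,
      ENNReal.ofReal x⁻¹ * ∏ j, ENNReal.ofReal (x ^ m j / m j)
        = ENNReal.ofReal (x ^ s) * ENNReal.ofReal (1 / ∏ j, (m j : ℝ)) := by
    intro x ⟨hx, _⟩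
    rw [← ENNReal.ofReal_prod_of_nonneg fun j _ => by positivity,
      ← ENNReal.ofReal_mul (inv_pos.2 hx).le, ← ENNReal.ofReal_mul (by positivity),
      Finset.prod_div_distrib, Finset.prod_pow_eq_pow_sum, hs, pow_succ]
    field_simp
  rw [setLIntegral_congr_fun measurableSet_Ioo hintegrand,
    lintegral_mul_const _ (by fun_prop), lintegral_Ioo_zero_one_pow,
    ← ENNReal.ofReal_mul (by positivity), one_div_mul_one_div, hs, mul_comm]
  push_cast
  rfl

theorem tsum_ofReal_MTterm_ones_one {r : ℕ} (hr : 0 < r) :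
    ∑' m, ENNReal.ofReal (MTterm r (fun _ => 1) 1 m)
      = ∫⁻ x in Ioo (0 : ℝ) 1, ENNReal.ofReal x⁻¹ * ENNReal.ofReal (-Real.log (1 - x)) ^ r := by
  have : Nonempty (Fin r) := ⟨⟨0, hr⟩⟩
  calc _ = ∑' m : {m : Fin r → ℕ // ∀ j, 0 < m j}, ∫⁻ x in Ioo (0 : ℝ) 1,
        ENNReal.ofReal x⁻¹ * ∏ j, ENNReal.ofReal (x ^ m.1 j / m.1 j) :=
        tsum_congr fun m => by
          simpa [MTterm] using ofReal_one_div_prod_mul_sum_eq_lintegral m.1 m.2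
    _ = ∑' n : Fin r → ℕ, ∫⁻ x in Ioo (0 : ℝ) 1,
        ENNReal.ofReal x⁻¹ * ∏ j, ENNReal.ofReal (x ^ (n j + 1) / (n j + 1)) := by
        rw [← (posTupleEquiv (Fin r)).tsum_eq]
        simp [posTupleEquiv]
    _ = ∫⁻ x in Ioo (0 : ℝ) 1, ∑' n : Fin r → ℕ,
        ENNReal.ofReal x⁻¹ * ∏ j, ENNReal.ofReal (x ^ (n j + 1) / (n j + 1)) :=
        (lintegral_tsum fun n => by fun_prop).symm
    _ = _ := setLIntegral_congr_fun measurableSet_Ioo fun x ⟨hx₀, hx₁⟩ => by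
        rw [ENNReal.tsum_mul_left,
          ENNReal.tsum_pi_prod fun _ (k : ℕ) => ENNReal.ofReal (x ^ (k + 1) / (k + 1)),
          Finset.prod_const, Finset.card_univ, Fintype.card_fin,
          tsum_ofReal_pow_succ_div hx₀.le hx₁]

theorem lintegral_Ioo_inv_mul_neg_log_one_sub_pow (r : ℕ) :
    ∫⁻ x in Ioo (0 : ℝ) 1, ENNReal.ofReal x⁻¹ * ENNReal.ofReal (-Real.log (1 - x)) ^ r
      = ∑' k : ℕ, ENNReal.ofReal (r.factorial / ((k : ℝ) + 1) ^ (r + 1)) := by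
  have hsubst : ∀ t ∈ Ioi (0 : ℝ), ENNReal.ofReal (Real.exp (-t)) *
      (ENNReal.ofReal (1 - Real.exp (-t))⁻¹ *
        ENNReal.ofReal (-Real.log (1 - (1 - Real.exp (-t)))) ^ r)
      = ∑' k : ℕ, ENNReal.ofReal (t ^ r * Real.exp (-(k + 1) * t)) := by
    intro t (ht : 0 < t)
    have hq : 0 < 1 - Real.exp (-t) := sub_pos.2 (Real.exp_lt_one_iff.2 (neg_lt_zero.2 ht))
    rw [tsum_congr fun k => ENNReal.ofReal_mul (pow_nonneg ht.le r), ENNReal.tsum_mul_left,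
      tsum_ofReal_exp_neg_succ_mul ht, sub_sub_cancel, Real.log_exp, neg_neg,
      ← ENNReal.ofReal_pow ht.le, ← ENNReal.ofReal_mul (inv_pos.2 hq).le,
      ← ENNReal.ofReal_mul (Real.exp_pos _).le, ← ENNReal.ofReal_mul (by positivity)]
    ring_nf
  calc _ = ∫⁻ t in Ioi (0 : ℝ), ∑' k : ℕ,
          ENNReal.ofReal (t ^ r * Real.exp (-(k + 1) * t)) := by
        rw [lintegral_Ioo_zero_one_eq_lintegral_Ioi_exp_neg]
        exact setLIntegral_congr_fun measurableSet_Ioi hsubst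
    _ = ∑' k : ℕ, ∫⁻ t in Ioi (0 : ℝ), ENNReal.ofReal (t ^ r * Real.exp (-(k + 1) * t)) :=
        lintegral_tsum fun k => by fun_prop
    _ = _ := tsum_congr fun k => lintegral_Ioi_pow_mul_exp_neg_mul r (by positivity)

/-- For any positive integer `r`,
`T(1, 1, …, 1; 1) = r! · ζ(r + 1)` (with `r` ones among the first arguments of `T`),
i.e. `∑_{m_1, …, m_r ≥ 1} 1/(m_1 ⋯ m_r (m_1 + ⋯ + m_r)) = r! ∑_{n=1}^∞ n^{-(r+1)}`. -/
theorem mt_ones_one (r : ℕ) (hr : 0 < r) :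
    MT r (fun _ => 1) 1 = (Nat.factorial r : ℝ) * zetaVal (r + 1) := by
  have hterm (m : {m : Fin r → ℕ // ∀ j, 0 < m j}) : 0 ≤ MTterm r (fun _ => 1) 1 m := by
    unfold MTterm
    positivity
  rw [MT, tsum_eq_toReal_tsum_ofReal hterm, tsum_ofReal_MTterm_ones_one hr,
    lintegral_Ioo_inv_mul_neg_log_one_sub_pow,
    ← tsum_eq_toReal_tsum_ofReal fun k => by positivity, zetaVal, ← tsum_mul_left]
  simp_rw [mul_one_div]
end
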